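/- Uniform bounds near c = 1: for k ≥ 0 and (1-e^k)^+ ≤ c < 1, -2·Φ^{-1}((1-c)/2) ≤ Y_BS(k,c) ≤ -2·Φ^{-1}((1-c)/(1+e^k)). -/

import Mathlib

open MeasureTheory Real Filter Asymptotics Set

/-- Standard normal density. -/
noncomputable def phi (z : ℝ) : ℝ := (Real.sqrt (2 * Real.pi))⁻¹ * Real.exp (-z ^ 2 / 2)

/-- Standard normal CDF. -/
noncomputable def Phi (x : ℝ) : ℝ := ∫ z in Set.Iic x, phi z

/-- Black–Scholes normalized call price. -/
noncomputable def CBS (k y : ℝ) : ℝ :=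
  if 0 < y then Phi (-k / y + y / 2) - Real.exp k * Phi (-k / y - y / 2)
  else max (1 - Real.exp k) 0

/-- Implied total standard deviation: inverse of `CBS k` on `[0,∞)`. -/
noncomputable def YBS (k c : ℝ) : ℝ := sInf {y : ℝ | 0 ≤ y ∧ CBS k y = c}

/-- Inverse of the standard normal CDF on (0,1). -/
noncomputable def PhiInv (u : ℝ) : ℝ := sInf {x : ℝ | u ≤ Phi x}

/-- Extended-real quantile with the convention `Φ⁻¹(u) = +∞` for `u ≥ 1`, `-∞` for `u ≤ 0`. -/
noncomputable def PhiInvE (u : ℝ) : EReal :=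
  if 1 ≤ u then ⊤ else if u ≤ 0 then ⊥ else ((PhiInv u : ℝ) : EReal)

/-!
For `y > 0` the price `k ↦ Φ(-k/y + y/2) - e^k Φ(-k/y - y/2)` has derivative
`-e^k Φ(-k/y - y/2)`: the density terms cancel because `e^k φ(-k/y - y/2) = φ(-k/y + y/2)`.
For `k ≥ 0` this derivative lies between `-e^k Φ(-y/2)` and `0`, so integrating from `k = 0`,
where the price is `1 - 2Φ(-y/2)`, gives
`1 - (1 + e^k) Φ(-y/2) ≤ C_BS(k, y) ≤ 1 - 2Φ(-y/2)`.
At any `y` with `C_BS(k, y) = c` these invert through `Φ` to the two bounds. The envelopes tend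
to `0` as `y → 0` and to `1` as `y → ∞`, so such `y` exist and the bounds pass to the infimum
`Y_BS(k, c)`.
-/

open Topology ProbabilityTheory

lemma phi_eq_gaussianPDFReal : phi = gaussianPDFReal 0 1 := by
  ext z
  simp [phi, gaussianPDFReal]

lemma phi_pos (z : ℝ) : 0 < phi z :=
  phi_eq_gaussianPDFReal ▸ gaussianPDFReal_pos 0 1 z one_ne_zero

lemma integrable_phi : Integrable phi :=
  phi_eq_gaussianPDFReal ▸ integrable_gaussianPDFReal 0 1

lemma integral_phi : ∫ z, phi z = 1 :=
  phi_eq_gaussianPDFReal ▸ integral_gaussianPDFReal_eq_one 0 one_ne_zero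

lemma continuous_phi : Continuous phi := by
  unfold phi
  fun_prop

lemma phi_neg (z : ℝ) : phi (-z) = phi z := by
  simp [phi]

lemma Phi_sub_Phi (a b : ℝ) : Phi b - Phi a = ∫ z in a..b, phi z :=
  intervalIntegral.integral_Iic_sub_Iic integrable_phi.integrableOn integrable_phi.integrableOn

lemma Phi_eq_add_integral (x : ℝ) : Phi x = Phi 0 + ∫ z in 0..x, phi z := by
  rw [← Phi_sub_Phi]
  ring

lemma strictMono_Phi : StrictMono Phi := fun a b hab => by
  have h : 0 < ∫ z in a..b, phi z :=
    intervalIntegral.intervalIntegral_pos_of_pos integrable_phi.intervalIntegrable phi_pos hab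
  linarith [Phi_sub_Phi a b]

lemma Phi_nonneg (x : ℝ) : 0 ≤ Phi x :=
  setIntegral_nonneg measurableSet_Iic fun z _ => (phi_pos z).le

lemma Phi_neg (x : ℝ) : Phi (-x) = 1 - Phi x := by
  have h_tail : Phi (-x) = ∫ z in Ioi x, phi z := by
    simp_rw [Phi, ← integral_comp_neg_Ioi, phi_neg]
  have h_total : Phi x + ∫ z in Ioi x, phi z = 1 := by
    rw [Phi, intervalIntegral.integral_Iic_add_Ioi integrable_phi.integrableOn
      integrable_phi.integrableOn, integral_phi]
  linarith

lemma Phi_zero : Phi 0 = 1 / 2 := by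
  linarith [neg_zero (G := ℝ) ▸ Phi_neg 0]

lemma hasDerivAt_Phi (x : ℝ) : HasDerivAt Phi (phi x) x := by
  rw [funext Phi_eq_add_integral]
  exact (intervalIntegral.integral_hasDerivAt_right integrable_phi.intervalIntegrable
    continuous_phi.stronglyMeasurable.stronglyMeasurableAtFilter
    continuous_phi.continuousAt).const_add _

@[fun_prop]
lemma continuous_Phi : Continuous Phi :=
  continuous_iff_continuousAt.mpr fun x => (hasDerivAt_Phi x).continuousAt

lemma tendsto_Phi_atBot : Tendsto Phi atBot (𝓝 0) := by
  have h := (intervalIntegral_tendsto_integral_Iic 0 integrable_phi.integrableOn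
    tendsto_id).const_sub (Phi 0)
  have h_eq : ∀ x, Phi 0 - ∫ z in x..0, phi z = Phi x := fun x => by
    rw [← Phi_sub_Phi]
    ring
  simp only [id, h_eq] at h
  rwa [← Phi, sub_self] at h

lemma tendsto_Phi_atTop : Tendsto Phi atTop (𝓝 1) := by
  have h := (tendsto_Phi_atBot.comp tendsto_neg_atTop_atBot).const_sub 1
  simpa only [Function.comp_def, Phi_neg, sub_sub_cancel, sub_zero] using h

lemma PhiInv_le {u x : ℝ} (hu : 0 < u) (h : u ≤ Phi x) : PhiInv u ≤ x := by
  obtain ⟨b, hb⟩ : ∃ b, Phi b < u := (tendsto_Phi_atBot.eventually_lt_const hu).exists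
  refine csInf_le ⟨b, fun z hz => ?_⟩ h
  by_contra! hzb
  exact (strictMono_Phi.monotone hzb.le).not_gt (hb.trans_le hz)

lemma le_PhiInv {u x : ℝ} (hu : u < 1) (h : Phi x ≤ u) : x ≤ PhiInv u := by
  obtain ⟨b, hb⟩ : ∃ b, u < Phi b := (tendsto_Phi_atTop.eventually_const_lt hu).exists
  refine le_csInf ⟨b, hb.le⟩ fun z hz => ?_
  by_contra! hzx
  exact (strictMono_Phi hzx).not_ge (h.trans hz)

noncomputable def bsPrice (k y : ℝ) : ℝ := Phi (-k / y + y / 2) - exp k * Phi (-k / y - y / 2)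

lemma CBS_of_pos (k : ℝ) {y : ℝ} (hy : 0 < y) : CBS k y = bsPrice k y := if_pos hy

lemma CBS_zero {k : ℝ} (hk : 0 ≤ k) : CBS k 0 = 0 := by
  simp [CBS, one_le_exp hk]

lemma exp_mul_phi_sub (k : ℝ) {y : ℝ} (hy : y ≠ 0) :
    exp k * phi (-k / y - y / 2) = phi (-k / y + y / 2) := by
  rw [phi, phi, mul_left_comm, ← exp_add]
  congr 2
  field_simp
  ring

lemma bsPrice_zero_left (y : ℝ) : bsPrice 0 y = 1 - 2 * Phi (-(y / 2)) := by
  rw [bsPrice, neg_zero, zero_div, zero_add, zero_sub, exp_zero, one_mul,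
    ← neg_neg (y / 2), Phi_neg, neg_neg]
  ring

lemma hasDerivAt_bsPrice_left {y : ℝ} (hy : y ≠ 0) (k : ℝ) :
    HasDerivAt (fun k => bsPrice k y) (-(exp k * Phi (-k / y - y / 2))) k := by
  have hd₁ : HasDerivAt (fun k => -k / y + y / 2) (-1 / y) k := by
    simpa using ((hasDerivAt_id k).neg.div_const y).add_const (y / 2)
  have hd₂ : HasDerivAt (fun k => -k / y - y / 2) (-1 / y) k := by
    simpa using ((hasDerivAt_id k).neg.div_const y).sub_const (y / 2)
  have h := ((hasDerivAt_Phi _).comp k hd₁).sub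
    ((hasDerivAt_exp k).mul ((hasDerivAt_Phi _).comp k hd₂))
  refine h.congr_deriv ?_
  rw [Function.comp_apply, ← exp_mul_phi_sub k hy]
  ring

lemma bsPrice_le {k y : ℝ} (hk : 0 ≤ k) (hy : y ≠ 0) : bsPrice k y ≤ 1 - 2 * Phi (-(y / 2)) := by
  have h_anti : Antitone fun k => bsPrice k y :=
    antitone_of_hasDerivAt_nonpos (hasDerivAt_bsPrice_left hy) fun k =>
      neg_nonpos.mpr (mul_nonneg (exp_pos k).le (Phi_nonneg _))
  simpa only [bsPrice_zero_left] using h_anti hk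

lemma le_bsPrice {k y : ℝ} (hk : 0 ≤ k) (hy : 0 < y) :
    1 - (1 + exp k) * Phi (-(y / 2)) ≤ bsPrice k y := by
  set G : ℝ → ℝ := fun k => bsPrice k y + (1 + exp k) * Phi (-(y / 2))
  have hG : ∀ k, HasDerivAt G (exp k * (Phi (-(y / 2)) - Phi (-k / y - y / 2))) k := fun k => by
    refine ((hasDerivAt_bsPrice_left hy.ne' k).add
      (((hasDerivAt_exp k).const_add 1).mul_const (Phi (-(y / 2))))).congr_deriv ?_
    ring
  have h_mono : MonotoneOn G (Ici 0) := by
    refine monotoneOn_of_hasDerivWithinAt_nonneg (convex_Ici 0)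
      (fun k _ => (hG k).continuousAt.continuousWithinAt) (fun k _ => (hG k).hasDerivWithinAt)
      fun k hk => mul_nonneg (exp_pos k).le (sub_nonneg.mpr (strictMono_Phi.monotone ?_))
    rw [interior_Ici, mem_Ioi] at hk
    have : 0 < k / y := div_pos hk hy
    linarith [neg_div y k]
  have h := h_mono self_mem_Ici hk hk
  simp only [G, bsPrice_zero_left, exp_zero] at h
  linarith

lemma continuousOn_bsPrice (k : ℝ) : ContinuousOn (bsPrice k) (Ioi 0) := fun y hy => by
  have : y ≠ 0 := ne_of_gt hy
  unfold bsPrice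
  fun_prop (disch := assumption)

lemma CBS_le {k y : ℝ} (hk : 0 ≤ k) (hy : 0 ≤ y) : CBS k y ≤ 1 - 2 * Phi (-(y / 2)) := by
  rcases hy.eq_or_lt with rfl | hy
  · simp [CBS_zero hk, Phi_zero]
  · exact CBS_of_pos k hy ▸ bsPrice_le hk hy.ne'

lemma le_CBS {k y : ℝ} (hk : 0 ≤ k) (hy : 0 ≤ y) : 1 - (1 + exp k) * Phi (-(y / 2)) ≤ CBS k y := by
  rcases hy.eq_or_lt with rfl | hy
  · simp only [CBS_zero hk, neg_zero, zero_div, Phi_zero]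
    linarith [one_le_exp hk]
  · exact CBS_of_pos k hy ▸ le_bsPrice hk hy

lemma exists_CBS_eq {k c : ℝ} (hk : 0 ≤ k) (hc : 0 ≤ c) (hc1 : c < 1) :
    ∃ y, 0 ≤ y ∧ CBS k y = c := by
  rcases hc.eq_or_lt with rfl | hc
  · exact ⟨0, le_rfl, CBS_zero hk⟩
  have h_upper : Tendsto (fun y => 1 - 2 * Phi (-(y / 2))) (𝓝[>] 0) (𝓝 0) := by
    have h := (show Continuous fun y => 1 - 2 * Phi (-(y / 2)) by fun_prop).tendsto 0
    simpa [Phi_zero] using h.mono_left nhdsWithin_le_nhds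
  have h_lower : Tendsto (fun y => 1 - (1 + exp k) * Phi (-(y / 2))) atTop (𝓝 1) := by
    have h := ((tendsto_Phi_atBot.comp (tendsto_neg_atTop_atBot.comp
      (tendsto_id.atTop_div_const two_pos))).const_mul (1 + exp k)).const_sub 1
    simpa using h
  obtain ⟨a, ha, ha_pos⟩ : ∃ a, 1 - 2 * Phi (-(a / 2)) < c ∧ 0 < a :=
    ((h_upper.eventually_lt_const hc).and self_mem_nhdsWithin).exists
  obtain ⟨b, hb, hab⟩ : ∃ b, c < 1 - (1 + exp k) * Phi (-(b / 2)) ∧ a ≤ b :=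
    ((h_lower.eventually_const_lt hc1).and (eventually_ge_atTop a)).exists
  have h_cont : ContinuousOn (CBS k) (Icc a b) :=
    ((continuousOn_bsPrice k).mono fun y hy => ha_pos.trans_le hy.1).congr
      fun y hy => CBS_of_pos k (ha_pos.trans_le hy.1)
  obtain ⟨y, hy, hyc⟩ := intermediate_value_Icc hab h_cont
    ⟨(CBS_le hk ha_pos.le).trans ha.le, hb.le.trans (le_CBS hk (ha_pos.le.trans hab))⟩
  exact ⟨y, ha_pos.le.trans hy.1, hyc⟩

lemma neg_two_mul_PhiInv_le_of_CBS_eq {k y c : ℝ} (hk : 0 ≤ k) (hy : 0 ≤ y) (hc : 0 ≤ c)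
    (hyc : CBS k y = c) : -2 * PhiInv ((1 - c) / 2) ≤ y := by
  have h := le_PhiInv (u := (1 - c) / 2) (x := -(y / 2)) (by linarith) (by linarith [CBS_le hk hy])
  linarith

lemma le_neg_two_mul_PhiInv_of_CBS_eq {k y c : ℝ} (hk : 0 ≤ k) (hy : 0 ≤ y) (hc1 : c < 1)
    (hyc : CBS k y = c) : y ≤ -2 * PhiInv ((1 - c) / (1 + exp k)) := by
  have h_pos : 0 < 1 + exp k := by positivity
  have h := PhiInv_le (u := (1 - c) / (1 + exp k)) (x := -(y / 2)) (div_pos (by linarith) h_pos)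
    ((div_le_iff₀ h_pos).mpr (by linarith [le_CBS hk hy]))
  linarith

theorem stmt_14 (k c : ℝ) (hk : 0 ≤ k) (hc : max (1 - Real.exp k) 0 ≤ c) (hc1 : c < 1) :
    -2 * PhiInv ((1 - c) / 2) ≤ YBS k c ∧
    YBS k c ≤ -2 * PhiInv ((1 - c) / (1 + Real.exp k)) := by
  have hc₀ : 0 ≤ c := (le_max_right _ _).trans hc
  obtain ⟨y₀, hy₀, hy₀c⟩ := exists_CBS_eq hk hc₀ hc1
  constructor
  · exact le_csInf ⟨y₀, hy₀, hy₀c⟩ fun y ⟨hy, hyc⟩ =>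
      neg_two_mul_PhiInv_le_of_CBS_eq hk hy hc₀ hyc
  · exact (csInf_le (⟨0, fun _ hy => hy.1⟩ : BddBelow {y | 0 ≤ y ∧ CBS k y = c}) ⟨hy₀, hy₀c⟩).trans
      (le_neg_two_mul_PhiInv_of_CBS_eq hk hy₀ hc1 hy₀c)
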